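/- Let A, A* be a Leonard pair in Mat_{d+1}(K) with A tridiagonal and A* diagonal. Then A is irreducible, i.e., A_{i,i-1} ≠ 0 and A_{i-1,i} ≠ 0 for 1 ≤ i ≤ d. -/

import Mathlib

open Polynomial Matrix Finset

variable {K : Type*} [Field K]

/-- The primitive idempotent of `A` associated with eigenvalue `θ i`:
`E i = ∏_{j ≠ i} (A - θ j • 1) / (θ i - θ j)`. -/
noncomputable def primIdem {d : ℕ} (A : Matrix (Fin (d + 1)) (Fin (d + 1)) K)
    (θ : Fin (d + 1) → K) (i : Fin (d + 1)) : Matrix (Fin (d + 1)) (Fin (d + 1)) K :=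
  Polynomial.aeval A
    (∏ j ∈ Finset.univ.erase i,
      (Polynomial.C (θ i - θ j)⁻¹ * (Polynomial.X - Polynomial.C (θ j))))

/-- `A` is multiplicity-free with (distinct) eigenvalues `θ 0, …, θ d`. -/
def MultFreeWith {d : ℕ} (A : Matrix (Fin (d + 1)) (Fin (d + 1)) K)
    (θ : Fin (d + 1) → K) : Prop :=
  Function.Injective θ ∧ A.charpoly = ∏ i, (Polynomial.X - Polynomial.C (θ i))

/-- `θ` is an eigenvalue sequence for the (ordered) pair `A, B`: the corresponding
ordering of the primitive idempotents of `A` is an idempotent sequence for `A, B`. -/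
def IsEigenvalueSeq {d : ℕ} (A B : Matrix (Fin (d + 1)) (Fin (d + 1)) K)
    (θ : Fin (d + 1) → K) : Prop :=
  MultFreeWith A θ ∧
    ∀ i j : Fin (d + 1),
      (1 < |((i : ℕ) : ℤ) - ((j : ℕ) : ℤ)| → primIdem A θ i * B * primIdem A θ j = 0) ∧
      (|((i : ℕ) : ℤ) - ((j : ℕ) : ℤ)| = 1 → primIdem A θ i * B * primIdem A θ j ≠ 0)

/-- `A, B` is a Leonard pair in `Mat_{d+1}(K)`. -/
def IsLeonardPair {d : ℕ} (A B : Matrix (Fin (d + 1)) (Fin (d + 1)) K) : Prop :=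
  (∃ θ, IsEigenvalueSeq A B θ) ∧ (∃ θs, IsEigenvalueSeq B A θs)

/-- Every nonzero entry lies on the diagonal or the subdiagonal. -/
def LowerBidiagonal {K : Type*} [Field K] {d : ℕ}
    (A : Matrix (Fin (d + 1)) (Fin (d + 1)) K) : Prop :=
  ∀ i j : Fin (d + 1), (i : ℕ) ≠ (j : ℕ) → (i : ℕ) ≠ (j : ℕ) + 1 → A i j = 0

/-- Every nonzero entry lies on the diagonal or the superdiagonal. -/
def UpperBidiagonal {K : Type*} [Field K] {d : ℕ}
    (A : Matrix (Fin (d + 1)) (Fin (d + 1)) K) : Prop :=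
  ∀ i j : Fin (d + 1), (i : ℕ) ≠ (j : ℕ) → (j : ℕ) ≠ (i : ℕ) + 1 → A i j = 0

/-- Every nonzero entry lies on the diagonal, subdiagonal, or superdiagonal. -/
def Tridiagonal {K : Type*} [Field K] {d : ℕ}
    (A : Matrix (Fin (d + 1)) (Fin (d + 1)) K) : Prop :=
  ∀ i j : Fin (d + 1), 1 < |((i : ℕ) : ℤ) - ((j : ℕ) : ℤ)| → A i j = 0

section LeonardAux

variable {K : Type*} [Field K]
open Polynomial Matrix Finset

lemma aeval_diagonal' {n : Type*} [Fintype n] [DecidableEq n] (v : n → K) (p : K[X]) :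
    Polynomial.aeval (Matrix.diagonal v) p
      = Matrix.diagonal (fun k => Polynomial.eval (v k) p) := by
  have h : Matrix.diagonal v = Matrix.diagonalAlgHom K v := rfl
  rw [h, aeval_algHom_apply]
  have : (Polynomial.aeval v p : n → K) = fun k => Polynomial.eval (v k) p := by
    funext k
    have := (aeval_algHom_apply (Pi.evalAlgHom K (fun _ : n => K) k) v p).symm
    set_option linter.unnecessarySimpa false in
    simpa only [Pi.evalAlgHom_apply, Polynomial.coe_aeval_eq_eval] using this
  rw [this]
  rfl

lemma exists_perm_of_prod_eq' {n : ℕ} (θ v : Fin n → K) (hθ : Function.Injective θ)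
    (h : (∏ i, (X - C (θ i))) = ∏ k, (X - C (v k))) :
    ∃ σ : Fin n → Fin n, Function.Injective σ ∧ ∀ k, v k = θ (σ k) := by
  have key : Multiset.map θ Finset.univ.val = Multiset.map v Finset.univ.val := by
    have h1 := Polynomial.roots_multiset_prod_X_sub_C (Multiset.map θ Finset.univ.val)
    have h2 := Polynomial.roots_multiset_prod_X_sub_C (Multiset.map v Finset.univ.val)
    rw [Multiset.map_map] at h1 h2
    rw [← h1, ← h2]
    rw [← Finset.prod_eq_multiset_prod, ← Finset.prod_eq_multiset_prod]
    simp only [Function.comp]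
    rw [h]
  have hmem : ∀ k, ∃ i, θ i = v k := by
    intro k
    have : v k ∈ Multiset.map θ Finset.univ.val := by
      rw [key]
      exact Multiset.mem_map.2 ⟨k, Finset.mem_univ_val k, rfl⟩
    obtain ⟨i, _, hi⟩ := Multiset.mem_map.1 this
    exact ⟨i, hi⟩
  have hvnodup : (Multiset.map v Finset.univ.val).Nodup := by
    rw [← key]
    exact Multiset.Nodup.map hθ Finset.univ.nodup
  have hvinj : Function.Injective v := fun a b hab =>
    Multiset.inj_on_of_nodup_map hvnodup a (Finset.mem_univ_val a) b (Finset.mem_univ_val b) hab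
  refine ⟨fun k => (hmem k).choose, ?_, fun k => ((hmem k).choose_spec).symm⟩
  intro a b hab
  simp only at hab
  apply hvinj
  rw [← (hmem a).choose_spec, ← (hmem b).choose_spec, hab]

lemma path_perm' {d : ℕ} (g : ℕ → ℕ) (hle : ∀ j, j ≤ d → g j ≤ d)
    (hinj : ∀ a b, a ≤ d → b ≤ d → g a = g b → a = b)
    (hstep : ∀ j, j < d → (g (j+1) = g j + 1 ∨ g j = g (j+1) + 1)) :
    (∀ j, j ≤ d → g j = j) ∨ (∀ j, j ≤ d → g j = d - j) := by
  rcases Nat.eq_zero_or_pos d with hd | hd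
  · left; intro j hj
    subst hd
    interval_cases j
    have := hle 0 le_rfl; omega
  rcases hstep 0 hd with h0 | h0
  · left
    have hup : ∀ j, j < d → g (j+1) = g j + 1 := by
      intro j
      induction j with
      | zero => intro _; exact h0
      | succ n ih =>
        intro hn
        rcases hstep (n+1) hn with h | h
        · exact h
        · exfalso
          have h' : g (n+1) = g (n+2) + 1 := h
          have hn' : n < d := by omega
          have := ih hn'
          have : g (n+2) = g n := by omega
          have := hinj (n+2) n (by omega) (by omega) this
          omega
    have hval : ∀ j, j ≤ d → g j = g 0 + j := by
      intro j
      induction j with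
      | zero => intro _; omega
      | succ n ih =>
        intro hn
        have := hup n (by omega)
        have := ih (by omega)
        omega
    have h0z : g 0 = 0 := by
      have := hval d le_rfl
      have := hle d le_rfl
      omega
    intro j hj
    have := hval j hj
    omega
  · right
    have hdown : ∀ j, j < d → g j = g (j+1) + 1 := by
      intro j
      induction j with
      | zero => intro _; exact h0
      | succ n ih =>
        intro hn
        rcases hstep (n+1) hn with h | h
        · exfalso
          have h' : g (n+2) = g (n+1) + 1 := h
          have hn' : n < d := by omega
          have := ih hn'
          have : g (n+2) = g n := by omega
          have := hinj (n+2) n (by omega) (by omega) this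
          omega
        · exact h
    have hval : ∀ j, j ≤ d → g j + j = g 0 := by
      intro j
      induction j with
      | zero => intro _; omega
      | succ n ih =>
        intro hn
        have := hdown n (by omega)
        have := ih (by omega)
        omega
    have h0z : g 0 = d := by
      have := hval d le_rfl
      have := hle 0 (by omega)
      omega
    intro j hj
    have := hval j hj
    omega

end LeonardAux

theorem leonard_tridiag_irreducible {d : ℕ}
    (A Astar : Matrix (Fin (d + 1)) (Fin (d + 1)) K)
    (hLP : IsLeonardPair A Astar)
    (hA : Tridiagonal A) (hAs : Astar.IsDiag) :
    ∀ i : ℕ, ∀ _ : 1 ≤ i, ∀ _ : i ≤ d,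
      A ⟨i, by omega⟩ ⟨i - 1, by omega⟩ ≠ 0 ∧ A ⟨i - 1, by omega⟩ ⟨i, by omega⟩ ≠ 0 := by
  -- use the eigenvalue sequence for (Astar, A)
  obtain ⟨-, θs, ⟨hθinj, hchar⟩, hES⟩ := hLP
  -- Astar is diagonal, hence its charpoly is the product over diagonal entries
  have hAeq : Matrix.diagonal Astar.diag = Astar := hAs.diagonal_diag
  have hBT : Astar.BlockTriangular id := fun i j h => hAs (ne_of_gt h)
  have hchar2 : Astar.charpoly = ∏ k, (X - C (Astar.diag k)) :=
    Matrix.charpoly_of_upperTriangular Astar hBT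
  have hprod : (∏ i, (X - C (θs i))) = ∏ k, (X - C (Astar.diag k)) := by
    rw [← hchar, hchar2]
  obtain ⟨σ, hσinj, hσ⟩ := exists_perm_of_prod_eq' θs Astar.diag hθinj hprod
  have hσbij : Function.Bijective σ := Finite.injective_iff_bijective.1 hσinj
  set π : Fin (d + 1) → Fin (d + 1) := fun i => (Equiv.ofBijective σ hσbij).symm i with hπdef
  have hπ : ∀ i, σ (π i) = i := fun i => (Equiv.ofBijective σ hσbij).apply_symm_apply i
  have hπinj : Function.Injective π := (Equiv.ofBijective σ hσbij).symm.injective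
  -- compute the primitive idempotents of Astar
  have hE : ∀ i, primIdem Astar θs i
      = Matrix.diagonal (fun k => if σ k = i then (1 : K) else 0) := by
    intro i
    have : primIdem Astar θs i = Polynomial.aeval (Matrix.diagonal Astar.diag)
        (∏ j ∈ Finset.univ.erase i, (C (θs i - θs j)⁻¹ * (X - C (θs j)))) := by
      rw [hAeq]; rfl
    rw [this, aeval_diagonal']
    refine congrArg Matrix.diagonal (funext fun k => ?_)
    rw [Polynomial.eval_prod]
    by_cases hk : σ k = i
    · rw [if_pos hk]
      apply Finset.prod_eq_one
      intro j hj
      have hji : j ≠ i := Finset.ne_of_mem_erase hj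
      have hvk : Astar.diag k = θs i := by rw [hσ k, hk]
      rw [eval_mul, eval_C, eval_sub, eval_X, eval_C, hvk]
      exact inv_mul_cancel₀ (sub_ne_zero.2 (fun e => hji (hθinj e).symm))
    · rw [if_neg hk]
      apply Finset.prod_eq_zero (Finset.mem_erase.2 ⟨hk, Finset.mem_univ _⟩)
      rw [hσ k]
      simp
  -- extract that adjacent idempotents sandwich A nontrivially
  have key : ∀ i₁ i₂ : Fin (d + 1), |((i₁ : ℕ) : ℤ) - ((i₂ : ℕ) : ℤ)| = 1 →
      A (π i₁) (π i₂) ≠ 0 := by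
    intro i₁ i₂ habs
    have hne := (hES i₁ i₂).2 habs
    rw [hE, hE] at hne
    obtain ⟨k, l, hkl⟩ : ∃ k l, (Matrix.diagonal (fun k => if σ k = i₁ then (1 : K) else 0) * A *
        Matrix.diagonal (fun k => if σ k = i₂ then (1 : K) else 0)) k l ≠ 0 := by
      by_contra hcon
      push_neg at hcon
      exact hne (Matrix.ext fun k l => hcon k l)
    have hkl' : (if σ k = i₁ then (1 : K) else 0) * A k l *
        (if σ l = i₂ then (1 : K) else 0) ≠ 0 := by
      simpa [Matrix.mul_diagonal, Matrix.diagonal_mul] using hkl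
    have h1 : σ k = i₁ := by by_contra h; simp [h] at hkl'
    have h2 : σ l = i₂ := by by_contra h; simp [h] at hkl'
    rw [if_pos h1, if_pos h2, one_mul, mul_one] at hkl'
    have hk1 : k = π i₁ := hσinj (by rw [h1, hπ])
    have hl2 : l = π i₂ := hσinj (by rw [h2, hπ])
    rw [← hk1, ← hl2]
    exact hkl'
  -- π takes unit steps
  have hstep : ∀ j, (hj : j < d) →
      ((π ⟨j + 1, by omega⟩ : ℕ) = (π ⟨j, by omega⟩ : ℕ) + 1 ∨
       (π ⟨j, by omega⟩ : ℕ) = (π ⟨j + 1, by omega⟩ : ℕ) + 1) := by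
    intro j hj
    have habs : |(((⟨j + 1, by omega⟩ : Fin (d + 1)) : ℕ) : ℤ) -
        (((⟨j, by omega⟩ : Fin (d + 1)) : ℕ) : ℤ)| = 1 := by
      show |((j + 1 : ℕ) : ℤ) - ((j : ℕ) : ℤ)| = 1
      have : ((j + 1 : ℕ) : ℤ) - ((j : ℕ) : ℤ) = 1 := by push_cast; ring
      rw [this]; exact abs_one
    have h1 := key ⟨j + 1, by omega⟩ ⟨j, by omega⟩ habs
    have htri := mt (hA (π ⟨j + 1, by omega⟩) (π ⟨j, by omega⟩)) h1
    rw [not_lt] at htri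
    obtain ⟨hl, hr⟩ := abs_le.1 htri
    have hneq : (π (⟨j + 1, by omega⟩ : Fin (d + 1)) : ℕ) ≠ (π ⟨j, by omega⟩ : ℕ) := by
      intro h
      have : π (⟨j + 1, by omega⟩ : Fin (d + 1)) = π ⟨j, by omega⟩ := Fin.ext h
      have := hπinj this
      simp only [Fin.mk.injEq] at this
      omega
    omega
  -- hence π is id or the reversal
  set g : ℕ → ℕ := fun j => if h : j ≤ d then (π ⟨j, by omega⟩ : ℕ) else 0 with hgdef
  have hg : ∀ j, (h : j ≤ d) → g j = (π ⟨j, by omega⟩ : ℕ) := fun j h => dif_pos h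
  have hgle : ∀ j, j ≤ d → g j ≤ d := by
    intro j h
    rw [hg j h]
    exact Nat.lt_succ_iff.1 (π ⟨j, by omega⟩).isLt
  have hginj : ∀ a b, a ≤ d → b ≤ d → g a = g b → a = b := by
    intro a b ha hb hab
    rw [hg a ha, hg b hb] at hab
    have : π (⟨a, by omega⟩ : Fin (d + 1)) = π ⟨b, by omega⟩ := Fin.ext hab
    have := hπinj this
    simpa using this
  have hgstep : ∀ j, j < d → (g (j + 1) = g j + 1 ∨ g j = g (j + 1) + 1) := by
    intro j hj
    rw [hg (j + 1) (by omega), hg j (by omega)]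
    exact hstep j hj
  rcases path_perm' g hgle hginj hgstep with hid | hrev
  · -- π is the identity
    have hπval : ∀ j, (h : j ≤ d) → (π ⟨j, by omega⟩ : ℕ) = j := by
      intro j h
      rw [← hg j h]
      exact hid j h
    intro i hi1 hi2
    constructor
    · have habs : |(((⟨i, by omega⟩ : Fin (d + 1)) : ℕ) : ℤ) -
          (((⟨i - 1, by omega⟩ : Fin (d + 1)) : ℕ) : ℤ)| = 1 := by
        show |((i : ℕ) : ℤ) - ((i - 1 : ℕ) : ℤ)| = 1
        have : ((i : ℕ) : ℤ) - ((i - 1 : ℕ) : ℤ) = 1 := by omega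
        rw [this]; exact abs_one
      have := key ⟨i, by omega⟩ ⟨i - 1, by omega⟩ habs
      rwa [show π (⟨i, by omega⟩ : Fin (d + 1)) = ⟨i, by omega⟩ from
            Fin.ext (hπval i hi2),
          show π (⟨i - 1, by omega⟩ : Fin (d + 1)) = ⟨i - 1, by omega⟩ from
            Fin.ext (hπval (i - 1) (by omega))] at this
    · have habs : |(((⟨i - 1, by omega⟩ : Fin (d + 1)) : ℕ) : ℤ) -
          (((⟨i, by omega⟩ : Fin (d + 1)) : ℕ) : ℤ)| = 1 := by
        show |((i - 1 : ℕ) : ℤ) - ((i : ℕ) : ℤ)| = 1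
        have : ((i - 1 : ℕ) : ℤ) - ((i : ℕ) : ℤ) = -1 := by omega
        rw [this]; simp
      have := key ⟨i - 1, by omega⟩ ⟨i, by omega⟩ habs
      rwa [show π (⟨i - 1, by omega⟩ : Fin (d + 1)) = ⟨i - 1, by omega⟩ from
            Fin.ext (hπval (i - 1) (by omega)),
          show π (⟨i, by omega⟩ : Fin (d + 1)) = ⟨i, by omega⟩ from
            Fin.ext (hπval i hi2)] at this
  · -- π is the reversal
    have hπval : ∀ j, (h : j ≤ d) → (π ⟨j, by omega⟩ : ℕ) = d - j := by
      intro j h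
      rw [← hg j h]
      exact hrev j h
    intro i hi1 hi2
    constructor
    · have habs : |(((⟨d - i, by omega⟩ : Fin (d + 1)) : ℕ) : ℤ) -
          (((⟨d - i + 1, by omega⟩ : Fin (d + 1)) : ℕ) : ℤ)| = 1 := by
        show |((d - i : ℕ) : ℤ) - ((d - i + 1 : ℕ) : ℤ)| = 1
        have : ((d - i : ℕ) : ℤ) - ((d - i + 1 : ℕ) : ℤ) = -1 := by omega
        rw [this]; simp
      have := key ⟨d - i, by omega⟩ ⟨d - i + 1, by omega⟩ habs
      rwa [show π (⟨d - i, by omega⟩ : Fin (d + 1)) = ⟨i, by omega⟩ from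
            Fin.ext (by rw [hπval (d - i) (by omega)]; simp only [Fin.val_mk]; omega),
          show π (⟨d - i + 1, by omega⟩ : Fin (d + 1)) = ⟨i - 1, by omega⟩ from
            Fin.ext (by rw [hπval (d - i + 1) (by omega)]; simp only [Fin.val_mk]; omega)] at this
    · have habs : |(((⟨d - i + 1, by omega⟩ : Fin (d + 1)) : ℕ) : ℤ) -
          (((⟨d - i, by omega⟩ : Fin (d + 1)) : ℕ) : ℤ)| = 1 := by
        show |((d - i + 1 : ℕ) : ℤ) - ((d - i : ℕ) : ℤ)| = 1
        have : ((d - i + 1 : ℕ) : ℤ) - ((d - i : ℕ) : ℤ) = 1 := by omega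
        rw [this]; exact abs_one
      have := key ⟨d - i + 1, by omega⟩ ⟨d - i, by omega⟩ habs
      rwa [show π (⟨d - i + 1, by omega⟩ : Fin (d + 1)) = ⟨i - 1, by omega⟩ from
            Fin.ext (by rw [hπval (d - i + 1) (by omega)]; simp only [Fin.val_mk]; omega),
          show π (⟨d - i, by omega⟩ : Fin (d + 1)) = ⟨i, by omega⟩ from
            Fin.ext (by rw [hπval (d - i) (by omega)]; simp only [Fin.val_mk]; omega)] at this
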